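/- arXiv:2309.13548 — 9 statements merged into one kernel-verified Lean document; each statement's English description precedes it below -/
import Mathlib

section
/- Let m be a positive integer, F_1, F_2 : BitVec m → BitVec m, K_1, K_2, C : BitVec m, and let (L_1, R_1) ∈ BitVec m × BitVec m satisfy F_1(L_1) ⊕ R_1 = C. Define K_1' = F_2(K_1 ⊕ C) and K_2' = K_1' ⊕ K_2. Then after two Feistel-2* rounds the state is (L_3, R_3) with L_3 = L_1 ⊕ K_2' and R_3 = C ⊕ K_1. (In particular, the first-round output is (L_2, R_2) = (C ⊕ K_1, L_1).) -/
/-- If the plaintext satisfies `F₁(L₁) ⊕ R₁ = C`, and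
`K₁' = F₂(K₁ ⊕ C)`, `K₂' = K₁' ⊕ K₂`, then after two Feistel-2* rounds the
state `(L₃, R₃)` satisfies `L₃ = L₁ ⊕ K₂'` and `R₃ = C ⊕ K₁`; in particular the
first-round output is `(L₂, R₂) = (C ⊕ K₁, L₁)`. -/
theorem feistel2star_two_round_state (m : ℕ) (hm : 0 < m)
    (F1 F2 : BitVec m → BitVec m) (K1 K2 C : BitVec m)
    (L1 R1 L2 R2 L3 R3 : BitVec m)
    (hcond : F1 L1 ^^^ R1 = C)
    (K1' K2' : BitVec m)
    (hK1' : K1' = F2 (K1 ^^^ C))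
    (hK2' : K2' = K1' ^^^ K2)
    (h1 : (L2, R2) = (R1 ^^^ F1 L1 ^^^ K1, L1))
    (h2 : (L3, R3) = (R2 ^^^ F2 L2 ^^^ K2, L2)) :
    L3 = L1 ^^^ K2' ∧ R3 = C ^^^ K1 ∧ L2 = C ^^^ K1 ∧ R2 = L1 := by
  obtain ⟨h1a, h1b⟩ := Prod.mk.injEq .. ▸ h1
  obtain ⟨h2a, h2b⟩ := Prod.mk.injEq .. ▸ h2
  have hL2 : L2 = C ^^^ K1 := by
    rw [h1a, ← hcond]; rw [BitVec.xor_comm (F1 L1) R1]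
  subst hK1' hK2' h1b h2a h2b hL2
  refine ⟨?_, rfl, rfl, rfl⟩
  rw [BitVec.xor_comm C K1, BitVec.xor_assoc, ← BitVec.xor_assoc]
end

section
/- Let m be a positive integer, F_1, F_2, F_3 : BitVec m → BitVec m, K_1, K_2, K_3, C : BitVec m, and let (L_1, R_1) ∈ BitVec m × BitVec m satisfy F_1(L_1) ⊕ R_1 = C. Define K_2' = F_2(K_1 ⊕ C) ⊕ K_2. Then the left half of the state after three Feistel-2* rounds satisfies L_4 = F_3(L_1 ⊕ K_2') ⊕ C ⊕ K_1 ⊕ K_3. -/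
/-- If the plaintext satisfies `F₁(L₁) ⊕ R₁ = C` and
`K₂' = F₂(K₁ ⊕ C) ⊕ K₂`, then the left half of the state after three
Feistel-2* rounds satisfies `L₄ = F₃(L₁ ⊕ K₂') ⊕ C ⊕ K₁ ⊕ K₃`. -/
theorem feistel2star_three_round_left (m : ℕ) (hm : 0 < m)
    (F1 F2 F3 : BitVec m → BitVec m) (K1 K2 K3 C : BitVec m)
    (L1 R1 L2 R2 L3 R3 L4 R4 : BitVec m)
    (hcond : F1 L1 ^^^ R1 = C)
    (K2' : BitVec m)
    (hK2' : K2' = F2 (K1 ^^^ C) ^^^ K2)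
    (h1 : (L2, R2) = (R1 ^^^ F1 L1 ^^^ K1, L1))
    (h2 : (L3, R3) = (R2 ^^^ F2 L2 ^^^ K2, L2))
    (h3 : (L4, R4) = (R3 ^^^ F3 L3 ^^^ K3, L3)) :
    L4 = F3 (L1 ^^^ K2') ^^^ C ^^^ K1 ^^^ K3 := by
  simp only [Prod.mk.injEq] at h1 h2 h3
  obtain ⟨hL2, hR2⟩ := h1
  obtain ⟨hL3, hR3⟩ := h2
  obtain ⟨hL4, hR4⟩ := h3
  have hL2' : L2 = C ^^^ K1 := by
    rw [hL2, BitVec.xor_comm R1 (F1 L1), hcond]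
  have hL3' : L3 = L1 ^^^ K2' := by
    rw [hL3, hR2, hL2', hK2', BitVec.xor_comm C K1, BitVec.xor_assoc]
  rw [hL4, hR3, hL3', hL2']
  rw [BitVec.xor_comm (C ^^^ K1) (F3 (L1 ^^^ K2')), ← BitVec.xor_assoc]
end

section
/- Let m be a positive integer, F_1, …, F_6 : BitVec m → BitVec m, K_1, …, K_6, C : BitVec m, and let (L_1, R_1) and (L_1', R_1') be two plaintexts satisfying the chosen-plaintext condition F_1(L_1) ⊕ R_1 = F_1(L_1') ⊕ R_1' = C. Denote by (L_i, R_i) and (L_i', R_i') the corresponding intermediate states of the Feistel-2* rounds. Then the differences satisfy L_2 ⊕ L_2' = 0, R_3 ⊕ R_3' = 0, and L_3 ⊕ L_3' = L_1 ⊕ L_1'. -/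
/-- For two plaintexts satisfying the chosen-plaintext
condition `F₁(L₁) ⊕ R₁ = F₁(L₁') ⊕ R₁' = C`, the differences of the
Feistel-2* intermediate states satisfy `L₂ ⊕ L₂' = 0`, `R₃ ⊕ R₃' = 0` and
`L₃ ⊕ L₃' = L₁ ⊕ L₁'`. -/
theorem feistel2star_chosen_plaintext_differences (m : ℕ) (hm : 0 < m)
    (F1 F2 : BitVec m → BitVec m) (K1 K2 C : BitVec m)
    (L1 R1 L2 R2 L3 R3 : BitVec m)
    (L1' R1' L2' R2' L3' R3' : BitVec m)
    (hcond : F1 L1 ^^^ R1 = C)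
    (hcond' : F1 L1' ^^^ R1' = C)
    (h1 : (L2, R2) = (R1 ^^^ F1 L1 ^^^ K1, L1))
    (h2 : (L3, R3) = (R2 ^^^ F2 L2 ^^^ K2, L2))
    (h1' : (L2', R2') = (R1' ^^^ F1 L1' ^^^ K1, L1'))
    (h2' : (L3', R3') = (R2' ^^^ F2 L2' ^^^ K2, L2')) :
    L2 ^^^ L2' = 0 ∧ R3 ^^^ R3' = 0 ∧ L3 ^^^ L3' = L1 ^^^ L1' := by
  obtain ⟨hL2, hR2⟩ := Prod.mk.injEq .. ▸ h1
  obtain ⟨hL3, hR3⟩ := Prod.mk.injEq .. ▸ h2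
  obtain ⟨hL2', hR2'⟩ := Prod.mk.injEq .. ▸ h1'
  obtain ⟨hL3', hR3'⟩ := Prod.mk.injEq .. ▸ h2'
  have key : L2 = L2' := by
    subst hL2 hL2'
    rw [BitVec.xor_comm R1, BitVec.xor_comm R1', hcond, hcond']
  subst hL2 hR2 hL3 hR3 hL2' hR2' hL3' hR3'
  have z : (0 : BitVec m) = 0#m := rfl
  refine ⟨by rw [key, BitVec.xor_self, z], by rw [key, BitVec.xor_self, z], ?_⟩
  rw [key]
  have h : ∀ a b c : BitVec m, (a ^^^ c) ^^^ (b ^^^ c) = a ^^^ b := by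
    intro a b c
    rw [BitVec.xor_assoc, BitVec.xor_comm c, BitVec.xor_assoc, BitVec.xor_self,
      BitVec.xor_zero]
  rw [BitVec.xor_assoc R2, BitVec.xor_assoc R2']
  exact h _ _ _
end

section
/- Let m be a positive integer, F_1, F_2, F_3 : BitVec m → BitVec m, K_1, K_2, K_3, C : BitVec m, and let (L_1, R_1), (L_1', R_1') be two plaintexts satisfying F_1(L_1) ⊕ R_1 = F_1(L_1') ⊕ R_1' = C. Define K_2' = F_2(K_1 ⊕ C) ⊕ K_2, and let L_4, L_4' denote the left halves of the states after three Feistel-2* rounds for the two plaintexts. Then the matching-value difference satisfies ΔL_4 = L_4 ⊕ L_4' = F_3(L_1 ⊕ K_2') ⊕ F_3(L_1' ⊕ K_2'); in particular ΔL_4 depends only on L_1, L_1', F_3 and the single subkey value K_2'. -/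
private lemma xor_cancel_aux {m : ℕ} (c a k b : BitVec m) :
    (c ^^^ a ^^^ k) ^^^ (c ^^^ b ^^^ k) = a ^^^ b := by
  ext i
  simp [Bool.xor_assoc, Bool.xor_comm, Bool.xor_left_comm]

/-- For two plaintexts satisfying
`F₁(L₁) ⊕ R₁ = F₁(L₁') ⊕ R₁' = C` and `K₂' = F₂(K₁ ⊕ C) ⊕ K₂`, the
matching-value difference after three Feistel-2* rounds satisfies
`ΔL₄ = L₄ ⊕ L₄' = F₃(L₁ ⊕ K₂') ⊕ F₃(L₁' ⊕ K₂')`, so it depends only on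
`L₁, L₁', F₃` and the single subkey value `K₂'`. -/
theorem feistel2star_matching_value_round4 (m : ℕ) (hm : 0 < m)
    (F1 F2 F3 : BitVec m → BitVec m) (K1 K2 K3 C : BitVec m)
    (L1 R1 L2 R2 L3 R3 L4 R4 : BitVec m)
    (L1' R1' L2' R2' L3' R3' L4' R4' : BitVec m)
    (hcond : F1 L1 ^^^ R1 = C)
    (hcond' : F1 L1' ^^^ R1' = C)
    (K2' : BitVec m)
    (hK2' : K2' = F2 (K1 ^^^ C) ^^^ K2)
    (h1 : (L2, R2) = (R1 ^^^ F1 L1 ^^^ K1, L1))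
    (h2 : (L3, R3) = (R2 ^^^ F2 L2 ^^^ K2, L2))
    (h3 : (L4, R4) = (R3 ^^^ F3 L3 ^^^ K3, L3))
    (h1' : (L2', R2') = (R1' ^^^ F1 L1' ^^^ K1, L1'))
    (h2' : (L3', R3') = (R2' ^^^ F2 L2' ^^^ K2, L2'))
    (h3' : (L4', R4') = (R3' ^^^ F3 L3' ^^^ K3, L3')) :
    L4 ^^^ L4' = F3 (L1 ^^^ K2') ^^^ F3 (L1' ^^^ K2') := by
  simp only [Prod.mk.injEq] at h1 h2 h3 h1' h2' h3'
  obtain ⟨hL2, hR2⟩ := h1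
  obtain ⟨hL3, hR3⟩ := h2
  obtain ⟨hL4, _⟩ := h3
  obtain ⟨hL2', hR2'⟩ := h1'
  obtain ⟨hL3', hR3'⟩ := h2'
  obtain ⟨hL4', _⟩ := h3'
  have hL2eq : L2 = K1 ^^^ C := by
    rw [hL2, BitVec.xor_comm R1, hcond, BitVec.xor_comm C K1]
  have hL2eq' : L2' = K1 ^^^ C := by
    rw [hL2', BitVec.xor_comm R1', hcond', BitVec.xor_comm C K1]
  have hL3eq : L3 = L1 ^^^ K2' := by
    rw [hL3, hR2, hL2eq, hK2', BitVec.xor_assoc]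
  have hL3eq' : L3' = L1' ^^^ K2' := by
    rw [hL3', hR2', hL2eq', hK2', BitVec.xor_assoc]
  rw [hL4, hL4', hR3, hR3', hL3eq, hL3eq', hL2eq, hL2eq']
  exact xor_cancel_aux _ _ _ _
end

section
/- Let m be a positive integer, F_1, …, F_6 : BitVec m → BitVec m and K_1, …, K_6 : BitVec m. Let (L_7, R_7) and (L_7', R_7') be the 6-round Feistel-2* encryptions of two plaintexts, with intermediate states (L_i, R_i) and (L_i', R_i'). Then the difference of the left halves after four rounds is computable from the ciphertexts and K_6 alone: L_4 ⊕ L_4' = R_7 ⊕ R_7' ⊕ F_5(L_7 ⊕ F_6(R_7) ⊕ K_6) ⊕ F_5(L_7' ⊕ F_6(R_7') ⊕ K_6) (the subkey K_5 cancels in the difference). -/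
/-- For the 6-round Feistel-2* encryptions `(L₇, R₇)` and
`(L₇', R₇')` of two plaintexts, the difference of the left halves after four
rounds is computable from the ciphertexts and `K₆` alone:
`L₄ ⊕ L₄' = R₇ ⊕ R₇' ⊕ F₅(L₇ ⊕ F₆(R₇) ⊕ K₆) ⊕ F₅(L₇' ⊕ F₆(R₇') ⊕ K₆)`
(the subkey `K₅` cancels in the difference). -/
theorem feistel2star_round4_difference_from_ciphertext (m : ℕ) (hm : 0 < m)
    (F1 F2 F3 F4 F5 F6 : BitVec m → BitVec m)
    (K1 K2 K3 K4 K5 K6 : BitVec m)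
    (L1 R1 L2 R2 L3 R3 L4 R4 L5 R5 L6 R6 L7 R7 : BitVec m)
    (L1' R1' L2' R2' L3' R3' L4' R4' L5' R5' L6' R6' L7' R7' : BitVec m)
    (h1 : (L2, R2) = (R1 ^^^ F1 L1 ^^^ K1, L1))
    (h2 : (L3, R3) = (R2 ^^^ F2 L2 ^^^ K2, L2))
    (h3 : (L4, R4) = (R3 ^^^ F3 L3 ^^^ K3, L3))
    (h4 : (L5, R5) = (R4 ^^^ F4 L4 ^^^ K4, L4))
    (h5 : (L6, R6) = (R5 ^^^ F5 L5 ^^^ K5, L5))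
    (h6 : (L7, R7) = (R6 ^^^ F6 L6 ^^^ K6, L6))
    (h1' : (L2', R2') = (R1' ^^^ F1 L1' ^^^ K1, L1'))
    (h2' : (L3', R3') = (R2' ^^^ F2 L2' ^^^ K2, L2'))
    (h3' : (L4', R4') = (R3' ^^^ F3 L3' ^^^ K3, L3'))
    (h4' : (L5', R5') = (R4' ^^^ F4 L4' ^^^ K4, L4'))
    (h5' : (L6', R6') = (R5' ^^^ F5 L5' ^^^ K5, L5'))
    (h6' : (L7', R7') = (R6' ^^^ F6 L6' ^^^ K6, L6')) :
    L4 ^^^ L4' =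
      R7 ^^^ R7' ^^^ F5 (L7 ^^^ F6 R7 ^^^ K6) ^^^ F5 (L7' ^^^ F6 R7' ^^^ K6) := by
  obtain ⟨h6a, h6b⟩ := Prod.mk.injEq .. ▸ h6
  obtain ⟨h6a', h6b'⟩ := Prod.mk.injEq .. ▸ h6'
  obtain ⟨h5a, h5b⟩ := Prod.mk.injEq .. ▸ h5
  obtain ⟨h5a', h5b'⟩ := Prod.mk.injEq .. ▸ h5'
  obtain ⟨h4a, h4b⟩ := Prod.mk.injEq .. ▸ h4
  obtain ⟨h4a', h4b'⟩ := Prod.mk.injEq .. ▸ h4'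
  subst h6a h6b h6a' h6b' h5a h5b h5a' h5b' h4a h4b h4a' h4b'
  have key : ∀ c d : BitVec m, c ^^^ F6 d ^^^ K6 ^^^ F6 d ^^^ K6 = c := by
    intro c d
    ext i
    simp [Bool.xor_assoc, Bool.xor_comm, Bool.xor_left_comm]
  rw [key, key]
  ext i
  simp [Bool.xor_assoc, Bool.xor_comm, Bool.xor_left_comm]
end

section
/- Let m be a positive integer, F_1, …, F_6 : BitVec m → BitVec m, K_1, …, K_6, C : BitVec m. Let (L_1^(i), R_1^(i)), i = 1, 2, 3, be three plaintexts satisfying F_1(L_1^(i)) ⊕ R_1^(i) = C, and let (L_7^(i), R_7^(i)) be their 6-round Feistel-2* encryptions. Define K_2' = F_2(K_1 ⊕ C) ⊕ K_2 and the functions f_1(x) = F_3(L_1^(1) ⊕ x) ⊕ F_3(L_1^(2) ⊕ x), f_2(x) = F_3(L_1^(1) ⊕ x) ⊕ F_3(L_1^(3) ⊕ x), g_1(y) = R_7^(1) ⊕ R_7^(2) ⊕ F_5(L_7^(1) ⊕ F_6(R_7^(1)) ⊕ y) ⊕ F_5(L_7^(2) ⊕ F_6(R_7^(2)) ⊕ y),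 and g_2(y) = R_7^(1) ⊕ R_7^(3) ⊕ F_5(L_7^(1) ⊕ F_6(R_7^(1)) ⊕ y) ⊕ F_5(L_7^(3) ⊕ F_6(R_7^(3)) ⊕ y). Then the pair (K_2', K_6) is a simultaneous claw of these functions: f_1(K_2') = g_1(K_6) and f_2(K_2') = g_2(K_6). -/
private lemma bv_xor_cancel {m : ℕ} (a b : BitVec m) : a ^^^ (a ^^^ b) = b := by
  rw [← BitVec.xor_assoc, BitVec.xor_self, BitVec.zero_xor]

private lemma bv_xor_left_comm {m : ℕ} (a b c : BitVec m) :
    a ^^^ (b ^^^ c) = b ^^^ (a ^^^ c) := by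
  rw [← BitVec.xor_assoc, BitVec.xor_comm a b, BitVec.xor_assoc]

private lemma bv_rot3 {m : ℕ} {a b c d : BitVec m} (h : a = b ^^^ c ^^^ d) :
    b = a ^^^ c ^^^ d := by
  subst h
  simp [BitVec.xor_assoc, BitVec.xor_comm, bv_xor_left_comm, bv_xor_cancel]

private lemma bv_solve {m : ℕ} {a x b c : BitVec m} (h : a ^^^ x ^^^ b = c) :
    x = a ^^^ b ^^^ c := by
  subst h
  simp [BitVec.xor_assoc, BitVec.xor_comm, bv_xor_left_comm, bv_xor_cancel]

/-- Three plaintexts `(L₁⁽ⁱ⁾, R₁⁽ⁱ⁾)` satisfying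
`F₁(L₁⁽ⁱ⁾) ⊕ R₁⁽ⁱ⁾ = C` are encrypted with the 6-round Feistel-2* structure
to ciphertexts `(L₇⁽ⁱ⁾, R₇⁽ⁱ⁾)`. With `K₂' = F₂(K₁ ⊕ C) ⊕ K₂` and the
functions `f₁, f₂, g₁, g₂` built from the plaintexts and ciphertexts, the
pair `(K₂', K₆)` is a simultaneous claw: `f₁(K₂') = g₁(K₆)` and
`f₂(K₂') = g₂(K₆)`.

Plaintext `i` (for `i = 1, 2, 3`) is indexed by `j : Fin 3`, and the state
after round `r` is `(L j (r+1), R j (r+1))`, with rounds `r = 1, …, 6`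
indexed by natural numbers. -/
theorem feistel2star_claw_of_true_subkeys (m : ℕ) (hm : 0 < m)
    (F : ℕ → BitVec m → BitVec m) (K : ℕ → BitVec m) (C : BitVec m)
    (L R : Fin 3 → ℕ → BitVec m)
    (hcond : ∀ j : Fin 3, F 1 (L j 1) ^^^ R j 1 = C)
    (hstep : ∀ j : Fin 3, ∀ i : ℕ, 1 ≤ i → i ≤ 6 →
      L j (i + 1) = R j i ^^^ F i (L j i) ^^^ K i ∧ R j (i + 1) = L j i)
    (K2' : BitVec m) (hK2' : K2' = F 2 (K 1 ^^^ C) ^^^ K 2)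
    (f1 f2 g1 g2 : BitVec m → BitVec m)
    (hf1 : ∀ x, f1 x = F 3 (L 0 1 ^^^ x) ^^^ F 3 (L 1 1 ^^^ x))
    (hf2 : ∀ x, f2 x = F 3 (L 0 1 ^^^ x) ^^^ F 3 (L 2 1 ^^^ x))
    (hg1 : ∀ y, g1 y = R 0 7 ^^^ R 1 7 ^^^
        F 5 (L 0 7 ^^^ F 6 (R 0 7) ^^^ y) ^^^ F 5 (L 1 7 ^^^ F 6 (R 1 7) ^^^ y))
    (hg2 : ∀ y, g2 y = R 0 7 ^^^ R 2 7 ^^^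
        F 5 (L 0 7 ^^^ F 6 (R 0 7) ^^^ y) ^^^ F 5 (L 2 7 ^^^ F 6 (R 2 7) ^^^ y)) :
    f1 K2' = g1 (K 6) ∧ f2 K2' = g2 (K 6) := by
  have key : ∀ j : Fin 3, F 3 (L j 1 ^^^ K2') =
      C ^^^ K 1 ^^^ K 3 ^^^ K 5 ^^^ R j 7 ^^^ F 5 (L j 7 ^^^ F 6 (R j 7) ^^^ K 6) := by
    intro j
    obtain ⟨h1L, h1R⟩ := hstep j 1 (by norm_num) (by norm_num)
    obtain ⟨h2L, h2R⟩ := hstep j 2 (by norm_num) (by norm_num)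
    obtain ⟨h3L, h3R⟩ := hstep j 3 (by norm_num) (by norm_num)
    obtain ⟨h4L, h4R⟩ := hstep j 4 (by norm_num) (by norm_num)
    obtain ⟨h5L, h5R⟩ := hstep j 5 (by norm_num) (by norm_num)
    obtain ⟨h6L, h6R⟩ := hstep j 6 (by norm_num) (by norm_num)
    norm_num at *
    have hL2 : L j 2 = C ^^^ K 1 := by
      rw [h1L, ← hcond j]
      simp [BitVec.xor_assoc, BitVec.xor_comm, bv_xor_left_comm]
    have hL3 : L j 3 = L j 1 ^^^ K2' := by
      rw [h2L, h1R, hL2, hK2']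
      simp [BitVec.xor_assoc, BitVec.xor_comm, bv_xor_left_comm]
    have hR5 : R j 5 = C ^^^ K 1 ^^^ F 3 (L j 1 ^^^ K2') ^^^ K 3 := by
      rw [h4R, h3L, h2R, hL2, hL3]
    have hL6 : L j 6 = R j 7 := h6R.symm
    have hR6 : R j 6 = L j 7 ^^^ F 6 (R j 7) ^^^ K 6 := by
      have h := h6L; rw [hL6] at h; exact bv_rot3 h
    have hL5 : L j 5 = L j 7 ^^^ F 6 (R j 7) ^^^ K 6 := by rw [← h5R, hR6]
    have hR5' : R j 5 = R j 7 ^^^ F 5 (L j 7 ^^^ F 6 (R j 7) ^^^ K 6) ^^^ K 5 := by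
      have h := h5L; rw [hL6, hL5] at h; exact bv_rot3 h
    have h := hR5.symm.trans hR5'
    have h2 := bv_solve h
    rw [h2]
    simp [BitVec.xor_assoc, BitVec.xor_comm, bv_xor_left_comm]
  constructor
  · rw [hf1, hg1, key 0, key 1]
    simp [BitVec.xor_assoc, BitVec.xor_comm, bv_xor_left_comm, bv_xor_cancel]
  · rw [hf2, hg2, key 0, key 2]
    simp [BitVec.xor_assoc, BitVec.xor_comm, bv_xor_left_comm, bv_xor_cancel]
end

section
/- Let m be a positive integer, F_1, …, F_6 : BitVec m → BitVec m, K_1, …, K_6, C : BitVec m, and let (L_1, R_1), (L_1', R_1') be two plaintexts satisfying F_1(L_1) ⊕ R_1 = F_1(L_1') ⊕ R_1' = C, with 6-round Feistel-2* ciphertexts (L_7, R_7), (L_7', R_7'). Then the true subkeys K_5 and K_6 satisfy the matching equation L_7 ⊕ L_7' ⊕ F_6(R_7) ⊕ F_6(R_7') ⊕ F_4(R_7 ⊕ K_5 ⊕ F_5(L_7 ⊕ K_6 ⊕ F_6(R_7))) ⊕ F_4(R_7' ⊕ K_5 ⊕ F_5(L_7' ⊕ K_6 ⊕ F_6(R_7')))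 = L_1 ⊕ L_1', i.e., the difference of the third-round left halves computed from the ciphertexts in the decryption direction equals L_1 ⊕ L_1'. -/
/-- For two plaintexts satisfying the chosen-plaintext
condition `F₁(L₁) ⊕ R₁ = F₁(L₁') ⊕ R₁' = C`, with 6-round Feistel-2*
ciphertexts `(L₇, R₇)` and `(L₇', R₇')`, the true subkeys `K₅` and `K₆`
satisfy the matching equation
`L₇ ⊕ L₇' ⊕ F₆(R₇) ⊕ F₆(R₇') ⊕ F₄(R₇ ⊕ K₅ ⊕ F₅(L₇ ⊕ K₆ ⊕ F₆(R₇)))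
  ⊕ F₄(R₇' ⊕ K₅ ⊕ F₅(L₇' ⊕ K₆ ⊕ F₆(R₇'))) = L₁ ⊕ L₁'`. -/
theorem feistel2star_K5_K6_matching_equation (m : ℕ) (hm : 0 < m)
    (F1 F2 F3 F4 F5 F6 : BitVec m → BitVec m)
    (K1 K2 K3 K4 K5 K6 C : BitVec m)
    (L1 R1 L2 R2 L3 R3 L4 R4 L5 R5 L6 R6 L7 R7 : BitVec m)
    (L1' R1' L2' R2' L3' R3' L4' R4' L5' R5' L6' R6' L7' R7' : BitVec m)
    (hcond : F1 L1 ^^^ R1 = C)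
    (hcond' : F1 L1' ^^^ R1' = C)
    (h1 : (L2, R2) = (R1 ^^^ F1 L1 ^^^ K1, L1))
    (h2 : (L3, R3) = (R2 ^^^ F2 L2 ^^^ K2, L2))
    (h3 : (L4, R4) = (R3 ^^^ F3 L3 ^^^ K3, L3))
    (h4 : (L5, R5) = (R4 ^^^ F4 L4 ^^^ K4, L4))
    (h5 : (L6, R6) = (R5 ^^^ F5 L5 ^^^ K5, L5))
    (h6 : (L7, R7) = (R6 ^^^ F6 L6 ^^^ K6, L6))
    (h1' : (L2', R2') = (R1' ^^^ F1 L1' ^^^ K1, L1'))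
    (h2' : (L3', R3') = (R2' ^^^ F2 L2' ^^^ K2, L2'))
    (h3' : (L4', R4') = (R3' ^^^ F3 L3' ^^^ K3, L3'))
    (h4' : (L5', R5') = (R4' ^^^ F4 L4' ^^^ K4, L4'))
    (h5' : (L6', R6') = (R5' ^^^ F5 L5' ^^^ K5, L5'))
    (h6' : (L7', R7') = (R6' ^^^ F6 L6' ^^^ K6, L6')) :
    L7 ^^^ L7' ^^^ F6 R7 ^^^ F6 R7' ^^^
        F4 (R7 ^^^ K5 ^^^ F5 (L7 ^^^ K6 ^^^ F6 R7)) ^^^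
        F4 (R7' ^^^ K5 ^^^ F5 (L7' ^^^ K6 ^^^ F6 R7')) = L1 ^^^ L1' := by
  injection h1 with hL2 hR2
  injection h2 with hL3 hR3
  injection h3 with hL4 hR4
  injection h4 with hL5 hR5
  injection h5 with hL6 hR6
  injection h6 with hL7 hR7
  injection h1' with hL2' hR2'
  injection h2' with hL3' hR3'
  injection h3' with hL4' hR4'
  injection h4' with hL5' hR5'
  injection h5' with hL6' hR6'
  injection h6' with hL7' hR7'
  have hC : R1 ^^^ F1 L1 = C := by rw [BitVec.xor_comm]; exact hcond
  have hC' : R1' ^^^ F1 L1' = C := by rw [BitVec.xor_comm]; exact hcond'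
  have eL2 : L2' = L2 := by rw [hL2, hL2', hC, hC']
  have a6 : L7 ^^^ K6 ^^^ F6 R7 = L5 := by
    rw [hL7, hR7, hR6]
    simp [BitVec.xor_assoc, BitVec.xor_comm, bv_xor_left_comm, bv_xor_cancel]
  have a4 : R7 ^^^ K5 ^^^ F5 L5 = L4 := by
    rw [hR7, hL6, hR5]
    simp [BitVec.xor_assoc, BitVec.xor_comm, bv_xor_left_comm, bv_xor_cancel]
  have a6' : L7' ^^^ K6 ^^^ F6 R7' = L5' := by
    rw [hL7', hR7', hR6']
    simp [BitVec.xor_assoc, BitVec.xor_comm, bv_xor_left_comm, bv_xor_cancel]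
  have a4' : R7' ^^^ K5 ^^^ F5 L5' = L4' := by
    rw [hR7', hL6', hR5']
    simp [BitVec.xor_assoc, BitVec.xor_comm, bv_xor_left_comm, bv_xor_cancel]
  rw [a6, a4, a6', a4', hL7, hL7', hR7, hR7', hR6, hR6', hL5, hL5', hR4, hR4',
    hL3, hL3', hR2, hR2', eL2]
  simp [BitVec.xor_assoc, BitVec.xor_comm, bv_xor_left_comm, bv_xor_cancel]
end

section
/- Let m be a positive integer, F_1, …, F_6 : BitVec m → BitVec m, K_1, …, K_6, C : BitVec m, and let (L_1, R_1), (L_1', R_1') be two plaintexts satisfying F_1(L_1) ⊕ R_1 = F_1(L_1') ⊕ R_1' = C, with 6-round Feistel-2* ciphertexts (L_7, R_7), (L_7', R_7'). Define from the ciphertexts A = R_7 ⊕ F_5(L_7 ⊕ F_6(R_7) ⊕ K_6) ⊕ K_5 and B = L_7 ⊕ F_6(R_7) ⊕ K_6 ⊕ F_4(A) ⊕ K_4, and A', B' analogously from (L_7', R_7'). Then the true subkeys K_4, K_5, K_6 satisfy the matching equation A ⊕ A' ⊕ F_3(B) ⊕ F_3(B') = 0 (i.e., the difference of the third-round right halves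 computed from the ciphertexts in the decryption direction vanishes). -/
private lemma bv_cancel3 {m : ℕ} (x y z : BitVec m) :
    x ^^^ y ^^^ z ^^^ y ^^^ z = x := by
  ext i
  simp [Bool.xor_assoc, Bool.xor_comm, Bool.xor_left_comm]

private lemma bv_final {m : ℕ} (c k1 k3 u v : BitVec m) :
    (c ^^^ k1 ^^^ u ^^^ k3) ^^^ (c ^^^ k1 ^^^ v ^^^ k3) ^^^ u ^^^ v = 0 := by
  ext i
  simp [Bool.xor_assoc, Bool.xor_comm, Bool.xor_left_comm]

/-- For two plaintexts satisfying the chosen-plaintext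
condition `F₁(L₁) ⊕ R₁ = F₁(L₁') ⊕ R₁' = C` with 6-round Feistel-2*
ciphertexts `(L₇, R₇)`, `(L₇', R₇')`, define from the ciphertexts
`A = R₇ ⊕ F₅(L₇ ⊕ F₆(R₇) ⊕ K₆) ⊕ K₅` and
`B = L₇ ⊕ F₆(R₇) ⊕ K₆ ⊕ F₄(A) ⊕ K₄`, and `A'`, `B'` analogously. Then the
true subkeys `K₄, K₅, K₆` satisfy the matching equation
`A ⊕ A' ⊕ F₃(B) ⊕ F₃(B') = 0`. -/
theorem feistel2star_K4_K5_K6_matching_equation (m : ℕ) (hm : 0 < m)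
    (F1 F2 F3 F4 F5 F6 : BitVec m → BitVec m)
    (K1 K2 K3 K4 K5 K6 C : BitVec m)
    (L1 R1 L2 R2 L3 R3 L4 R4 L5 R5 L6 R6 L7 R7 : BitVec m)
    (L1' R1' L2' R2' L3' R3' L4' R4' L5' R5' L6' R6' L7' R7' : BitVec m)
    (hcond : F1 L1 ^^^ R1 = C)
    (hcond' : F1 L1' ^^^ R1' = C)
    (h1 : (L2, R2) = (R1 ^^^ F1 L1 ^^^ K1, L1))
    (h2 : (L3, R3) = (R2 ^^^ F2 L2 ^^^ K2, L2))
    (h3 : (L4, R4) = (R3 ^^^ F3 L3 ^^^ K3, L3))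
    (h4 : (L5, R5) = (R4 ^^^ F4 L4 ^^^ K4, L4))
    (h5 : (L6, R6) = (R5 ^^^ F5 L5 ^^^ K5, L5))
    (h6 : (L7, R7) = (R6 ^^^ F6 L6 ^^^ K6, L6))
    (h1' : (L2', R2') = (R1' ^^^ F1 L1' ^^^ K1, L1'))
    (h2' : (L3', R3') = (R2' ^^^ F2 L2' ^^^ K2, L2'))
    (h3' : (L4', R4') = (R3' ^^^ F3 L3' ^^^ K3, L3'))
    (h4' : (L5', R5') = (R4' ^^^ F4 L4' ^^^ K4, L4'))
    (h5' : (L6', R6') = (R5' ^^^ F5 L5' ^^^ K5, L5'))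
    (h6' : (L7', R7') = (R6' ^^^ F6 L6' ^^^ K6, L6'))
    (A B A' B' : BitVec m)
    (hA : A = R7 ^^^ F5 (L7 ^^^ F6 R7 ^^^ K6) ^^^ K5)
    (hB : B = L7 ^^^ F6 R7 ^^^ K6 ^^^ F4 A ^^^ K4)
    (hA' : A' = R7' ^^^ F5 (L7' ^^^ F6 R7' ^^^ K6) ^^^ K5)
    (hB' : B' = L7' ^^^ F6 R7' ^^^ K6 ^^^ F4 A' ^^^ K4) :
    A ^^^ A' ^^^ F3 B ^^^ F3 B' = 0 := by
  simp only [Prod.mk.injEq] at h1 h2 h3 h4 h5 h6 h1' h2' h3' h4' h5' h6'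
  obtain ⟨e2, f2⟩ := h1; obtain ⟨e3, f3⟩ := h2; obtain ⟨e4, f4⟩ := h3
  obtain ⟨e5, f5⟩ := h4; obtain ⟨e6, f6⟩ := h5; obtain ⟨e7, f7⟩ := h6
  obtain ⟨e2', f2'⟩ := h1'; obtain ⟨e3', f3'⟩ := h2'; obtain ⟨e4', f4'⟩ := h3'
  obtain ⟨e5', f5'⟩ := h4'; obtain ⟨e6', f6'⟩ := h5'; obtain ⟨e7', f7'⟩ := h6'
  have hin : L7 ^^^ F6 R7 ^^^ K6 = L5 := by
    rw [e7, f7, e6, f6, bv_cancel3]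
  have hA2 : A = L4 := by
    rw [hA, hin, f7, e6, bv_cancel3, f5]
  have hin' : L7' ^^^ F6 R7' ^^^ K6 = L5' := by
    rw [e7', f7', e6', f6', bv_cancel3]
  have hA2' : A' = L4' := by
    rw [hA', hin', f7', e6', bv_cancel3, f5']
  have hB2 : B = L3 := by
    rw [hB, hin, hA2, e5, bv_cancel3, f4]
  have hB2' : B' = L3' := by
    rw [hB', hin', hA2', e5', bv_cancel3, f4']
  rw [hA2, hA2', hB2, hB2', e4, e4', f3, f3', e2, e2']
  rw [BitVec.xor_comm R1 (F1 L1), BitVec.xor_comm R1' (F1 L1'), hcond, hcond']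
  ext i
  simp [Bool.xor_assoc, Bool.xor_comm, Bool.xor_left_comm]
end

section
/- Let m be a positive integer, F_1, …, F_6 : BitVec m → BitVec m, K_1, …, K_6, C : BitVec m, and let (L_1, R_1) be a plaintext satisfying F_1(L_1) ⊕ R_1 = C, with 6-round Feistel-2* ciphertext (L_7, R_7). Define K_2' = F_2(K_1 ⊕ C) ⊕ K_2. Then the half R_4 computed from the ciphertext equals L_1 ⊕ K_2', that is, L_7 ⊕ F_6(R_7) ⊕ K_6 ⊕ F_4(R_7 ⊕ F_5(L_7 ⊕ F_6(R_7) ⊕ K_6) ⊕ K_5) ⊕ K_4 = L_1 ⊕ K_2'. -/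
/-- For a plaintext satisfying `F₁(L₁) ⊕ R₁ = C` with
6-round Feistel-2* ciphertext `(L₇, R₇)` and `K₂' = F₂(K₁ ⊕ C) ⊕ K₂`, the
third-round left half computed from the ciphertext in the decryption
direction equals `L₁ ⊕ K₂'`:
`L₇ ⊕ F₆(R₇) ⊕ K₆ ⊕ F₄(R₇ ⊕ F₅(L₇ ⊕ F₆(R₇) ⊕ K₆) ⊕ K₅) ⊕ K₄ = L₁ ⊕ K₂'`. -/
theorem feistel2star_K3_matching_equation (m : ℕ) (hm : 0 < m)
    (F1 F2 F3 F4 F5 F6 : BitVec m → BitVec m)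
    (K1 K2 K3 K4 K5 K6 C : BitVec m)
    (L1 R1 L2 R2 L3 R3 L4 R4 L5 R5 L6 R6 L7 R7 : BitVec m)
    (hcond : F1 L1 ^^^ R1 = C)
    (K2' : BitVec m)
    (hK2' : K2' = F2 (K1 ^^^ C) ^^^ K2)
    (h1 : (L2, R2) = (R1 ^^^ F1 L1 ^^^ K1, L1))
    (h2 : (L3, R3) = (R2 ^^^ F2 L2 ^^^ K2, L2))
    (h3 : (L4, R4) = (R3 ^^^ F3 L3 ^^^ K3, L3))
    (h4 : (L5, R5) = (R4 ^^^ F4 L4 ^^^ K4, L4))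
    (h5 : (L6, R6) = (R5 ^^^ F5 L5 ^^^ K5, L5))
    (h6 : (L7, R7) = (R6 ^^^ F6 L6 ^^^ K6, L6)) :
    L7 ^^^ F6 R7 ^^^ K6 ^^^
      F4 (R7 ^^^ F5 (L7 ^^^ F6 R7 ^^^ K6) ^^^ K5) ^^^ K4 = L1 ^^^ K2' := by
  simp only [Prod.mk.injEq] at h1 h2 h3 h4 h5 h6
  obtain ⟨e1, e2⟩ := h1
  obtain ⟨e3, e4⟩ := h2
  obtain ⟨e5, e6⟩ := h3
  obtain ⟨e7, e8⟩ := h4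
  obtain ⟨e9, e10⟩ := h5
  obtain ⟨e11, e12⟩ := h6
  have hc : R1 ^^^ F1 L1 = C := by rw [BitVec.xor_comm]; exact hcond
  have cancel : ∀ x y z : BitVec m, (x ^^^ y ^^^ z) ^^^ y ^^^ z = x := by
    intro x y z
    rw [BitVec.xor_assoc x y z, BitVec.xor_assoc, BitVec.xor_assoc,
      BitVec.xor_self, BitVec.xor_zero]
  have s1 : L7 ^^^ F6 R7 ^^^ K6 = R6 := by rw [e11, e12, e10, ← e10, cancel]
  have s2 : R7 ^^^ F5 R6 ^^^ K5 = L4 := by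
    rw [e12, e9, e10, ← e8, cancel]
  rw [s1, s2, e10, e7, cancel, e6, e3, e2, e1, hc, hK2',
    BitVec.xor_comm K1 C, BitVec.xor_assoc]
end
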